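/- arXiv:1902.04603 — 5 statements merged into one kernel-verified Lean document; each statement's English description precedes it below -/
import Mathlib

section
/- The improper integral ∫₀^∞ (ln x)/(x³ + 1) dx converges and equals −2π²/27. -/
/-!
On `(0, 1)` expand `1 / (x³ + 1) = ∑ (-x³)ⁿ` and integrate termwise, using
`∫₀¹ xᵏ log x dx = -1 / (k + 1)²`; the substitution `x ↦ 1/x` turns the part over `(1, ∞)`
into `-∫₀¹ x log x / (x³ + 1) dx`, which expands the same way. The integral is therefore
`∑ₙ (-1)ⁿ (1 / (3n + 2)² - 1 / (3n + 1)²) = ∑_{3 ∤ k} (-1)ᵏ / k²`, and since the terms with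
`3 ∣ k` contribute `1/9` of the full alternating sum `∑ (-1)ᵏ / k² = -π² / 12`, it equals
`8/9 · (-π² / 12) = -2π² / 27`.
-/

open MeasureTheory Real Set

theorem integrableOn_Ioo_mul_log {f : ℝ → ℝ} {a b : ℝ} (hab : a ≤ b)
    (hf : ContinuousOn f (Icc a b)) : IntegrableOn (fun x => f x * log x) (Ioo a b) :=
  (intervalIntegrable_iff_integrableOn_Ioo_of_le hab).1
    (intervalIntegral.intervalIntegrable_log'.continuousOn_mul (by rwa [uIcc_of_le hab]))

theorem integral_Ioo_pow_mul_log (k : ℕ) :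
    ∫ x in Ioo 0 1, x ^ k * log x = -1 / ((k : ℝ) + 1) ^ 2 := by
  rw [← integral_Ioc_eq_integral_Ioo, ← intervalIntegral.integral_of_le zero_le_one]
  set c : ℝ := k + 1
  have hc : c ≠ 0 := by positivity
  have hcont : Continuous fun x : ℝ => x ^ (k + 1) * log x := by
    simp only [pow_succ, mul_assoc]
    exact (continuous_pow k).mul continuous_mul_log
  let G : ℝ → ℝ := fun x => (c * (x ^ (k + 1) * log x) - x ^ (k + 1)) / c ^ 2
  have hG : ∀ x ∈ Ioo (0:ℝ) 1, HasDerivAt G (x ^ k * log x) x := by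
    intro x hx
    have hx0 : x ≠ 0 := hx.1.ne'
    refine (((((hasDerivAt_pow (k + 1) x).mul (hasDerivAt_log hx0)).const_mul c).sub
      (hasDerivAt_pow (k + 1) x)).div_const (c ^ 2)).congr_deriv ?_
    simp only [Nat.add_sub_cancel, c]
    field_simp
    push_cast
    ring
  rw [intervalIntegral.integral_eq_sub_of_hasDerivAt_of_le zero_le_one (by fun_prop) hG
    (intervalIntegral.intervalIntegrable_log'.continuousOn_mul (by fun_prop))]
  simp [G]

theorem image_inv_Ioo_zero_one : Inv.inv '' Ioo (0:ℝ) 1 = Ioi 1 := by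
  rw [image_inv_eq_inv, inv_Ioo_0_left one_pos, inv_one]

theorem integral_Ioi_one_eq_integral_Ioo_inv {E : Type*} [NormedAddCommGroup E]
    [NormedSpace ℝ E] (g : ℝ → E) :
    ∫ x in Ioi 1, g x = ∫ x in Ioo 0 1, (x ^ 2)⁻¹ • g x⁻¹ := by
  rw [← image_inv_Ioo_zero_one, integral_image_eq_integral_abs_deriv_smul measurableSet_Ioo
    (fun x hx => (hasDerivAt_inv hx.1.ne').hasDerivWithinAt) inv_injective.injOn]
  simp [abs_neg]

theorem integrableOn_Ioi_one_iff_integrableOn_Ioo_inv {E : Type*} [NormedAddCommGroup E]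
    [NormedSpace ℝ E] (g : ℝ → E) :
    IntegrableOn g (Ioi 1) ↔ IntegrableOn (fun x => (x ^ 2)⁻¹ • g x⁻¹) (Ioo 0 1) := by
  rw [← image_inv_Ioo_zero_one, integrableOn_image_iff_integrableOn_abs_deriv_smul measurableSet_Ioo
    (fun x hx => (hasDerivAt_inv hx.1.ne').hasDerivWithinAt) inv_injective.injOn]
  simp [abs_neg]

theorem Summable.tsum_eq_sum_residues_mod_three {R : Type*} [AddCommGroup R] [UniformSpace R]
    [IsUniformAddGroup R] [CompleteSpace R] [T0Space R] {f : ℕ → R} (hf : Summable f) :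
    ∑' k, f k = ∑' m, f (3 * m) + ∑' m, f (3 * m + 1) + ∑' m, f (3 * m + 2) := by
  rw [Nat.sumByResidueClasses hf 3]
  change ∑ j : Fin 3, _ = _
  simp only [Fin.sum_univ_three]
  simp [ZMod.val, add_comm]

theorem hasSum_neg_one_pow_div_sq :
    HasSum (fun k : ℕ => (-1 : ℝ) ^ k / (k : ℝ) ^ 2) (-(π ^ 2 / 12)) := by
  -- adding `∑ 1 / k ^ 2 = π ^ 2 / 6` cancels the odd terms and doubles the even ones
  have heven : HasSum (fun m : ℕ => (-1 : ℝ) ^ (2 * m) / ((2 * m : ℕ) : ℝ) ^ 2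
      + 1 / ((2 * m : ℕ) : ℝ) ^ 2) (1 / 2 * (π ^ 2 / 6)) :=
    (hasSum_zeta_two.mul_left (1 / 2)).congr_fun fun m => by
      push_cast; simp only [pow_mul, neg_one_sq, one_pow]; ring
  have hodd : HasSum (fun m : ℕ => (-1 : ℝ) ^ (2 * m + 1) / ((2 * m + 1 : ℕ) : ℝ) ^ 2
      + 1 / ((2 * m + 1 : ℕ) : ℝ) ^ 2) 0 :=
    hasSum_zero.congr_fun fun m => by simp [pow_succ, pow_mul, neg_div]
  rw [show -(π ^ 2 / 12) = 1 / 2 * (π ^ 2 / 6) + 0 - π ^ 2 / 6 by ring]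
  exact ((HasSum.even_add_odd (f := fun k : ℕ => (-1 : ℝ) ^ k / (k : ℝ) ^ 2 + 1 / (k : ℝ) ^ 2)
    heven hodd).sub hasSum_zeta_two).congr_fun fun k => by simp

theorem hasSum_neg_one_pow_div_sq_three_mul_add :
    HasSum (fun m : ℕ => (-1 : ℝ) ^ m / ((3 * m + 2 : ℕ) : ℝ) ^ 2
      - (-1) ^ m / ((3 * m + 1 : ℕ) : ℝ) ^ 2) (-2 * π ^ 2 / 27) := by
  let b : ℕ → ℝ := fun k => (-1) ^ k / (k : ℝ) ^ 2
  have hb : HasSum b (-(π ^ 2 / 12)) := hasSum_neg_one_pow_div_sq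
  have hres : ∀ r, Summable fun m => b (3 * m + r) := fun r =>
    hb.summable.comp_injective fun m n h => by simpa using h
  have hmul : HasSum (fun m => b (3 * m)) (-(π ^ 2 / 12) / 9) :=
    (hb.div_const 9).congr_fun fun m => by
      simp only [b]; push_cast; rw [pow_mul]; ring
  have hterm : ∀ m : ℕ, (-1 : ℝ) ^ m / ((3 * m + 2 : ℕ) : ℝ) ^ 2
      - (-1) ^ m / ((3 * m + 1 : ℕ) : ℝ) ^ 2 = b (3 * m + 1) + b (3 * m + 2) := fun m => by
    simp only [b, pow_succ, pow_mul]; ring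
  simp only [hterm]
  convert (hres 1).hasSum.add (hres 2).hasSum using 1
  linarith [hb.summable.tsum_eq_sum_residues_mod_three, hb.tsum_eq, hmul.tsum_eq]

theorem continuousOn_pow_div_pow_add_one (a p : ℕ) :
    ContinuousOn (fun x : ℝ => x ^ a / (x ^ p + 1)) (Ici 0) :=
  ContinuousOn.div (by fun_prop) (by fun_prop) fun x hx => by have : 0 ≤ x := hx; positivity

theorem hasSum_integral_Ioo_pow_div_pow_add_one_mul_log (a : ℕ) {p : ℕ} (hp : p ≠ 0) :
    HasSum (fun n : ℕ => -(-1) ^ n / ((p * n + a + 1 : ℕ) : ℝ) ^ 2)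
      (∫ x in Ioo 0 1, x ^ a / (x ^ p + 1) * log x) := by
  let F : ℕ → ℝ → ℝ := fun n x => (-1) ^ n * (x ^ (p * n + a) * log x)
  have hF_int : ∀ n, Integrable (F n) (volume.restrict (Ioo 0 1)) := fun n =>
    (integrableOn_Ioo_mul_log zero_le_one (continuousOn_pow _)).const_mul _
  have hF_norm : ∀ n, ∫ x in Ioo 0 1, ‖F n x‖ = 1 / ((p * n + a + 1 : ℕ) : ℝ) ^ 2 := by
    intro n
    rw [setIntegral_congr_fun measurableSet_Ioo (g := fun x => -(x ^ (p * n + a) * log x)),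
      integral_neg, integral_Ioo_pow_mul_log]
    · push_cast; ring
    · intro x hx
      simp [F, abs_of_pos hx.1, abs_of_nonpos (log_nonpos hx.1.le hx.2.le)]
  have hF_sum : Summable fun n => ∫ x in Ioo 0 1, ‖F n x‖ := by
    simp only [hF_norm]
    exact (summable_one_div_nat_pow.2 one_lt_two).comp_injective fun m n h => by simpa [hp] using h
  have hF_tsum : ∫ x in Ioo 0 1, x ^ a / (x ^ p + 1) * log x = ∫ x in Ioo 0 1, ∑' n, F n x := by
    refine setIntegral_congr_fun measurableSet_Ioo fun x hx => ?_
    have hxp : ‖-x ^ p‖ < 1 := by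
      rw [norm_neg, norm_pow, Real.norm_of_nonneg hx.1.le]
      exact pow_lt_one₀ hx.1.le hx.2 hp
    have hgeom := (hasSum_geometric_of_norm_lt_one hxp).mul_right (x ^ a * log x)
    rw [(hgeom.congr_fun fun n => ?_).tsum_eq]
    · rw [sub_neg_eq_add, add_comm]; ring
    · dsimp only [F]
      rw [neg_pow, pow_add, pow_mul]
      ring
  rw [hF_tsum]
  refine (hasSum_integral_of_summable_integral_norm hF_int hF_sum).congr_fun fun n => ?_
  simp only [F, integral_const_mul, integral_Ioo_pow_mul_log]
  push_cast
  ring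

theorem stmt_2 :
    MeasureTheory.IntegrableOn (fun x : ℝ => Real.log x / (x^3 + 1)) (Set.Ioi 0) ∧
    ∫ x in Set.Ioi (0:ℝ), Real.log x / (x^3 + 1) = -2 * Real.pi^2 / 27 := by
  set f : ℝ → ℝ := fun x => log x / (x ^ 3 + 1)
  have hf : f = fun x => x ^ 0 / (x ^ 3 + 1) * log x := by
    ext x; simp only [f, pow_zero]; ring
  have hf_inv : (fun x : ℝ => (x ^ 2)⁻¹ • f x⁻¹) = fun x => -(x ^ 1 / (x ^ 3 + 1) * log x) := by
    ext x
    rcases eq_or_ne x 0 with rfl | hx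
    · simp
    · simp only [f, smul_eq_mul, log_inv, inv_pow]
      field_simp
      ring
  have hcont (a : ℕ) : ContinuousOn (fun x : ℝ => x ^ a / (x ^ 3 + 1)) (Icc 0 1) :=
    (continuousOn_pow_div_pow_add_one a 3).mono Icc_subset_Ici_self
  have hIoo : IntegrableOn f (Ioo 0 1) := hf ▸ integrableOn_Ioo_mul_log zero_le_one (hcont 0)
  have hIoi : IntegrableOn f (Ioi 1) := by
    rw [integrableOn_Ioi_one_iff_integrableOn_Ioo_inv, hf_inv]
    exact (integrableOn_Ioo_mul_log zero_le_one (hcont 1)).neg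
  have hIoc : IntegrableOn f (Ioc 0 1) := (integrableOn_Ioc_iff_integrableOn_Ioo).2 hIoo
  rw [← Ioc_union_Ioi_eq_Ioi zero_le_one]
  refine ⟨hIoc.union hIoi, ?_⟩
  rw [setIntegral_union (Ioc_disjoint_Ioi le_rfl) measurableSet_Ioi hIoc hIoi,
    integral_Ioc_eq_integral_Ioo, integral_Ioi_one_eq_integral_Ioo_inv, hf_inv, integral_neg, hf,
    ← sub_eq_add_neg]
  refine HasSum.unique ?_ hasSum_neg_one_pow_div_sq_three_mul_add
  refine ((hasSum_integral_Ioo_pow_div_pow_add_one_mul_log 0 three_ne_zero).sub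
    (hasSum_integral_Ioo_pow_div_pow_add_one_mul_log 1 three_ne_zero)).congr_fun fun n => ?_
  ring
end

section
/- The improper integral ∫₀^∞ (ln x)/(x⁴ + 1) dx converges and equals −π²/(8√2). -/
/-!
Substituting `x = 1/u` on `(0, 1)` folds the integral onto `(1, ∞)`:
`∫₀^∞ log x / (x⁴ + 1) dx = ∫₁^∞ log u (1 - u²) / (u⁴ + 1) du`.
There `(1 - u²) / (u⁴ + 1) = ∑ₖ (-1)ᵏ (u^-(4k+4) - u^-(4k+2))`, the remainder after `N` terms is
at most `u^-(4N+2)` in absolute value, and `∫₁^∞ log u · u^-(m+2) du = 1/(m+1)²`; hence the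
integral is `∑ₖ (-1)ᵏ (1/(4k+3)² - 1/(4k+1)²)`. On odd `n` these signs are `√2 cos (π n / 4)`,
so the series is `-√2` times the odd part of the Fourier series `∑ cos (2π n x) / n² = π² B₂(x)`
at `x = 1/8`, and that odd part is `π² B₂(x) - π² B₂(2x) / 4 = π² / 16`.
-/

open Real MeasureTheory Set Filter Topology

section LogRpow

variable {s : ℝ}

lemma hasDerivAt_log_mul_rpow_antideriv (hs : s ≠ 1) {u : ℝ} (hu : 0 < u) :
    HasDerivAt (fun u ↦ -(log u / (s - 1) + 1 / (s - 1) ^ 2) * u ^ (1 - s))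
      (log u * u ^ (-s)) u := by
  have hs' : s - 1 ≠ 0 := sub_ne_zero.mpr hs
  have hlog := ((hasDerivAt_log hu.ne').div_const (s - 1)).add_const (1 / (s - 1) ^ 2)
  have hpow := hasDerivAt_rpow_const (p := 1 - s) (Or.inl hu.ne')
  refine (hlog.neg.mul hpow).congr_deriv ?_
  have hsplit : u ^ (1 - s) = u * u ^ (-s) := by
    rw [sub_eq_add_neg, rpow_add hu, rpow_one]
  simp only [Pi.neg_apply]
  rw [show 1 - s - 1 = -s by ring, hsplit]
  field_simp
  ring

lemma tendsto_log_mul_rpow_antideriv (hs : 1 < s) :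
    Tendsto (fun u ↦ -(log u / (s - 1) + 1 / (s - 1) ^ 2) * u ^ (1 - s)) atTop (𝓝 0) := by
  have hs' : 0 < s - 1 := sub_pos.mpr hs
  have hpow : Tendsto (fun u : ℝ ↦ u ^ (1 - s)) atTop (𝓝 0) := by
    simpa only [neg_sub] using tendsto_rpow_neg_atTop hs'
  have hlog : Tendsto (fun u : ℝ ↦ log u * u ^ (1 - s)) atTop (𝓝 0) := by
    refine (isLittleO_log_rpow_atTop hs').tendsto_div_nhds_zero.congr' ?_
    filter_upwards [eventually_gt_atTop 0] with u hu
    rw [div_eq_mul_inv, ← rpow_neg hu.le, neg_sub]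
  convert ((hlog.div_const (s - 1)).add (hpow.const_mul (1 / (s - 1) ^ 2))).neg using 2 with u
  · ring
  · simp

lemma integrableOn_log_mul_rpow_Ioi_one (hs : 1 < s) :
    IntegrableOn (fun u ↦ log u * u ^ (-s)) (Ioi 1) :=
  integrableOn_Ioi_deriv_of_nonneg
    (hasDerivAt_log_mul_rpow_antideriv hs.ne' one_pos).continuousAt.continuousWithinAt
    (fun _ hu ↦ hasDerivAt_log_mul_rpow_antideriv hs.ne' (one_pos.trans hu))
    (fun _ hu ↦ mul_nonneg (log_nonneg (le_of_lt hu))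
      (rpow_nonneg (zero_le_one.trans (le_of_lt hu)) _))
    (tendsto_log_mul_rpow_antideriv hs)

lemma integral_log_mul_rpow_Ioi_one (hs : 1 < s) :
    ∫ u in Ioi 1, log u * u ^ (-s) = 1 / (s - 1) ^ 2 := by
  rw [integral_Ioi_of_hasDerivAt_of_tendsto
    (hasDerivAt_log_mul_rpow_antideriv hs.ne' one_pos).continuousAt.continuousWithinAt
    (fun _ hu ↦ hasDerivAt_log_mul_rpow_antideriv hs.ne' (one_pos.trans hu))
    (integrableOn_log_mul_rpow_Ioi_one hs) (tendsto_log_mul_rpow_antideriv hs)]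
  simp

lemma log_div_pow_eq_log_mul_rpow (n : ℕ) {u : ℝ} (hu : 0 ≤ u) :
    log u / u ^ n = log u * u ^ (-(n : ℝ)) := by
  rw [rpow_neg hu, rpow_natCast, div_eq_mul_inv]

end LogRpow

lemma integrableOn_log_div_pow_Ioi_one (n : ℕ) :
    IntegrableOn (fun u ↦ log u / u ^ (n + 2)) (Ioi 1) := by
  refine (integrableOn_log_mul_rpow_Ioi_one (s := (n + 2 : ℕ)) (by norm_cast; omega)).congr_fun
    (fun u hu ↦ ?_) measurableSet_Ioi
  exact (log_div_pow_eq_log_mul_rpow _ (zero_le_one.trans (le_of_lt hu))).symm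

lemma integral_log_div_pow_Ioi_one (n : ℕ) :
    ∫ u in Ioi 1, log u / u ^ (n + 2) = 1 / ((n : ℝ) + 1) ^ 2 := by
  rw [setIntegral_congr_fun measurableSet_Ioi
    (fun u hu ↦ log_div_pow_eq_log_mul_rpow (n + 2) (zero_le_one.trans (le_of_lt hu))),
    integral_log_mul_rpow_Ioi_one (by norm_cast; omega)]
  push_cast
  ring

lemma integrableOn_Ioi_one_of_abs_le_log_div_pow {f : ℝ → ℝ} (n : ℕ) (hf : Measurable f)
    (h : ∀ u, 1 < u → |f u| ≤ log u / u ^ (n + 2)) : IntegrableOn f (Ioi 1) :=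
  (integrableOn_log_div_pow_Ioi_one n).mono' hf.aestronglyMeasurable
    ((ae_restrict_iff' measurableSet_Ioi).mpr (ae_of_all _ h))

section InvSubstitution

variable {E : Type*} [NormedAddCommGroup E] [NormedSpace ℝ E]

lemma image_inv_Ioi_one : Inv.inv '' Ioi (1 : ℝ) = Ioo 0 1 := by
  rw [image_inv_eq_inv, inv_Ioi₀ one_pos, inv_one]

lemma hasDerivWithinAt_inv_Ioi_one :
    ∀ u ∈ Ioi (1 : ℝ), HasDerivWithinAt Inv.inv (-(u ^ 2)⁻¹) (Ioi 1) u :=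
  fun _ hu ↦ (hasDerivAt_inv (one_pos.trans hu).ne').hasDerivWithinAt

lemma integrableOn_Ioo_zero_one_iff_comp_inv (g : ℝ → E) :
    IntegrableOn g (Ioo 0 1) ↔ IntegrableOn (fun u ↦ (u ^ 2)⁻¹ • g u⁻¹) (Ioi 1) := by
  rw [← image_inv_Ioi_one, integrableOn_image_iff_integrableOn_abs_deriv_smul measurableSet_Ioi
    hasDerivWithinAt_inv_Ioi_one inv_injective.injOn]
  simp only [abs_neg, abs_inv, abs_pow, sq_abs]

lemma integral_Ioo_zero_one_eq_integral_comp_inv (g : ℝ → E) :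
    ∫ x in Ioo 0 1, g x = ∫ u in Ioi 1, (u ^ 2)⁻¹ • g u⁻¹ := by
  rw [← image_inv_Ioi_one, integral_image_eq_integral_abs_deriv_smul measurableSet_Ioi
    hasDerivWithinAt_inv_Ioi_one inv_injective.injOn]
  simp only [abs_neg, abs_inv, abs_pow, sq_abs]

variable {g : ℝ → E}

lemma integrableOn_Ioi_zero_of_comp_inv (hg : IntegrableOn g (Ioi 1))
    (hg' : IntegrableOn (fun u ↦ (u ^ 2)⁻¹ • g u⁻¹) (Ioi 1)) : IntegrableOn g (Ioi 0) := by
  rw [← Ioo_union_Ici_eq_Ioi one_pos]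
  exact ((integrableOn_Ioo_zero_one_iff_comp_inv g).mpr hg').union
    ((integrableOn_Ici_iff_integrableOn_Ioi).mpr hg)

lemma integral_Ioi_zero_eq_integral_Ioi_one_add_comp_inv [CompleteSpace E]
    (hg : IntegrableOn g (Ioi 1)) (hg' : IntegrableOn (fun u ↦ (u ^ 2)⁻¹ • g u⁻¹) (Ioi 1)) :
    ∫ x in Ioi 0, g x = ∫ u in Ioi 1, (g u + (u ^ 2)⁻¹ • g u⁻¹) := by
  rw [← Ioo_union_Ici_eq_Ioi one_pos,
    setIntegral_union ((Iio_disjoint_Ici le_rfl).mono_left Ioo_subset_Iio_self) measurableSet_Ici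
    ((integrableOn_Ioo_zero_one_iff_comp_inv g).mpr hg')
    ((integrableOn_Ici_iff_integrableOn_Ioi).mpr hg), integral_Ici_eq_integral_Ioi,
    integral_Ioo_zero_one_eq_integral_comp_inv, integral_add hg hg', add_comm]

end InvSubstitution

section EvenOdd

variable {α : Type*} [AddCommGroup α] [UniformSpace α] [IsUniformAddGroup α] [CompleteSpace α]
  [T2Space α] {f : ℕ → α} {a b : α}

theorem HasSum.odd_of_even (hf : HasSum f a) (he : HasSum (fun k ↦ f (2 * k)) b) :
    HasSum (fun k ↦ f (2 * k + 1)) (a - b) := by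
  have ho : HasSum (fun k ↦ f (2 * k + 1)) _ := (hf.summable.comp_injective
    ((add_left_injective 1).comp (mul_right_injective₀ (two_ne_zero' ℕ)))).hasSum
  rwa [← (he.even_add_odd ho).unique hf, add_sub_cancel_left]

theorem HasSum.pair_even_odd (hf : HasSum f a) :
    HasSum (fun k ↦ f (2 * k) + f (2 * k + 1)) a := by
  have he : HasSum (fun k ↦ f (2 * k)) _ :=
    (hf.summable.comp_injective (mul_right_injective₀ (two_ne_zero' ℕ))).hasSum
  simpa using he.add (hf.odd_of_even he)

end EvenOdd

lemma eval_bernoulli_two (x : ℝ) :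
    ((Polynomial.bernoulli 2).map (algebraMap ℚ ℝ)).eval x = x ^ 2 - x + 1 / 6 := by
  simp [Polynomial.bernoulli, Finset.sum_range_succ, bernoulli_eq_bernoulli'_of_ne_one,
    bernoulli'_two, bernoulli'_zero]
  ring

lemma hasSum_cos_div_sq {x : ℝ} (hx : x ∈ Icc 0 1) :
    HasSum (fun n : ℕ ↦ cos (2 * π * n * x) / (n : ℝ) ^ 2) (π ^ 2 * (x ^ 2 - x + 1 / 6)) := by
  have h := hasSum_one_div_nat_pow_mul_cos (k := 1) one_ne_zero hx
  rw [show 2 * 1 = 2 from rfl, eval_bernoulli_two] at h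
  convert h using 1
  · ext n; ring
  · rw [Nat.factorial_two]; push_cast; ring

lemma hasSum_cos_odd_div_sq {x : ℝ} (hx₀ : 0 ≤ x) (hx₁ : x ≤ 1 / 2) :
    HasSum (fun m : ℕ ↦ cos (2 * π * (2 * m + 1) * x) / (2 * m + 1 : ℝ) ^ 2)
      (π ^ 2 * (1 - 4 * x) / 8) := by
  have hall := hasSum_cos_div_sq ⟨hx₀, by linarith⟩
  have heven : HasSum (fun m : ℕ ↦ cos (2 * π * (2 * m : ℕ) * x) / ((2 * m : ℕ) : ℝ) ^ 2)
      (π ^ 2 * ((2 * x) ^ 2 - 2 * x + 1 / 6) / 4) :=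
    ((hasSum_cos_div_sq (x := 2 * x) ⟨by linarith, by linarith⟩).div_const 4).congr_fun
      fun m ↦ by push_cast; rw [show 2 * π * (2 * (m : ℝ)) * x = 2 * π * m * (2 * x) by ring]; ring
  have hodd := hall.odd_of_even heven
  push_cast at hodd
  have hval : π ^ 2 * (x ^ 2 - x + 1 / 6) - π ^ 2 * ((2 * x) ^ 2 - 2 * x + 1 / 6) / 4
      = π ^ 2 * (1 - 4 * x) / 8 := by ring
  exact hval ▸ hodd

lemma hasSum_alternating_inv_sq_mod_eight :
    HasSum (fun k : ℕ ↦ (-1) ^ k * (1 / (4 * k + 3 : ℝ) ^ 2 - 1 / (4 * k + 1 : ℝ) ^ 2))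
      (-(π ^ 2 / (8 * √2))) := by
  have h := (hasSum_cos_odd_div_sq (x := 1 / 8) (by norm_num) (by norm_num)).pair_even_odd
  have hcos₁ (k : ℕ) : cos (2 * π * (2 * (2 * k : ℕ) + 1) * (1 / 8)) = (-1) ^ k * (√2 / 2) := by
    rw [← cos_pi_div_four, ← cos_add_nat_mul_pi]; push_cast; ring_nf
  have hcos₃ (k : ℕ) :
      cos (2 * π * (2 * (2 * k + 1 : ℕ) + 1) * (1 / 8)) = -((-1) ^ k * (√2 / 2)) := by
    rw [← cos_pi_div_four, ← mul_neg, ← cos_pi_sub, ← cos_add_nat_mul_pi]; push_cast; ring_nf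
  have hsq : √2 * √2 = 2 := mul_self_sqrt zero_le_two
  have hsum : -√2 * (π ^ 2 * (1 - 4 * (1 / 8)) / 8) = -(π ^ 2 / (8 * √2)) := by
    rw [neg_mul, neg_inj, eq_div_iff (by positivity)]
    linear_combination π ^ 2 / 2 * hsq
  refine hsum ▸ (h.mul_left (-√2)).congr_fun fun k ↦ ?_
  rw [hcos₁, hcos₃]
  push_cast
  linear_combination (-1) ^ k * (1 / (4 * k + 1 : ℝ) ^ 2 - 1 / (4 * k + 3 : ℝ) ^ 2) / 2 * hsq

lemma mul_one_sub_sq_div_sub_sum_eq (c : ℝ) {u : ℝ} (hu : u ≠ 0) (N : ℕ) :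
    c * (1 - u ^ 2) / (u ^ 4 + 1)
        - ∑ k ∈ Finset.range N, (-1) ^ k * (c / u ^ (4 * k + 4) - c / u ^ (4 * k + 2))
      = (-1) ^ N * (c * (1 - u ^ 2) / (u ^ 4 + 1) / u ^ (4 * N)) := by
  induction N with
  | zero => simp
  | succ N ih =>
    rw [Finset.sum_range_succ, ← sub_sub, ih]
    field_simp
    ring

lemma abs_one_sub_sq_div_le {u : ℝ} (hu : 1 ≤ u) : |(1 - u ^ 2) / (u ^ 4 + 1)| ≤ 1 / u ^ 2 := by
  have hu0 : 0 < u := zero_lt_one.trans_le hu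
  rw [abs_div, abs_of_nonpos (by nlinarith), abs_of_pos (by positivity),
    div_le_div_iff₀ (by positivity) (by positivity)]
  nlinarith [pow_pos hu0 2]

lemma abs_log_mul_one_sub_sq_div_div_pow_le (N : ℕ) {u : ℝ} (hu : 1 ≤ u) :
    |log u * (1 - u ^ 2) / (u ^ 4 + 1) / u ^ (4 * N)| ≤ log u / u ^ (4 * N + 2) := by
  have hu0 : 0 < u := zero_lt_one.trans_le hu
  have hlog : 0 ≤ log u := log_nonneg hu
  calc |log u * (1 - u ^ 2) / (u ^ 4 + 1) / u ^ (4 * N)|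
      = log u * |(1 - u ^ 2) / (u ^ 4 + 1)| / u ^ (4 * N) := by
        rw [abs_div, abs_of_pos (pow_pos hu0 _), mul_div_assoc, abs_mul, abs_of_nonneg hlog]
    _ ≤ log u * (1 / u ^ 2) / u ^ (4 * N) := by
        gcongr; exact abs_one_sub_sq_div_le hu
    _ = log u / u ^ (4 * N + 2) := by rw [pow_add]; field_simp

lemma integrableOn_log_mul_one_sub_sq_div_Ioi_one :
    IntegrableOn (fun u ↦ log u * (1 - u ^ 2) / (u ^ 4 + 1)) (Ioi 1) :=
  integrableOn_Ioi_one_of_abs_le_log_div_pow 0 (by fun_prop) fun u hu ↦ by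
    simpa using abs_log_mul_one_sub_sq_div_div_pow_le 0 hu.le

lemma integrableOn_alternating_term (k : ℕ) :
    IntegrableOn (fun u ↦ (-1) ^ k * (log u / u ^ (4 * k + 4) - log u / u ^ (4 * k + 2))) (Ioi 1) :=
  ((integrableOn_log_div_pow_Ioi_one (4 * k + 2)).sub
    (integrableOn_log_div_pow_Ioi_one (4 * k))).const_mul _

lemma integral_alternating_term (k : ℕ) :
    ∫ u in Ioi 1, (-1) ^ k * (log u / u ^ (4 * k + 4) - log u / u ^ (4 * k + 2))
      = (-1) ^ k * (1 / (4 * k + 3 : ℝ) ^ 2 - 1 / (4 * k + 1 : ℝ) ^ 2) := by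
  rw [integral_const_mul, integral_sub (integrableOn_log_div_pow_Ioi_one (4 * k + 2))
    (integrableOn_log_div_pow_Ioi_one (4 * k)), integral_log_div_pow_Ioi_one (4 * k + 2),
    integral_log_div_pow_Ioi_one (4 * k)]
  push_cast
  ring_nf

lemma abs_integral_log_mul_one_sub_sq_div_sub_sum_le (N : ℕ) :
    |(∫ u in Ioi 1, log u * (1 - u ^ 2) / (u ^ 4 + 1))
      - ∑ k ∈ Finset.range N, (-1) ^ k * (1 / (4 * k + 3 : ℝ) ^ 2 - 1 / (4 * k + 1 : ℝ) ^ 2)|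
      ≤ 1 / (4 * N + 1 : ℝ) ^ 2 := by
  simp_rw [← integral_alternating_term]
  have hterms (k : ℕ) (_ : k ∈ Finset.range N) := integrableOn_alternating_term k
  rw [← integral_finsetSum _ hterms, ← integral_sub integrableOn_log_mul_one_sub_sq_div_Ioi_one
    (integrable_finsetSum _ hterms), ← Real.norm_eq_abs]
  calc _ ≤ ∫ u in Ioi 1, log u / u ^ (4 * N + 2) := by
        refine norm_integral_le_of_norm_le (integrableOn_log_div_pow_Ioi_one (4 * N))
          ((ae_restrict_iff' measurableSet_Ioi).mpr (ae_of_all _ fun u hu ↦ ?_))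
        rw [Real.norm_eq_abs, mul_one_sub_sq_div_sub_sum_eq _ (zero_lt_one.trans hu).ne', abs_mul,
          abs_pow, abs_neg, abs_one, one_pow, one_mul]
        exact abs_log_mul_one_sub_sq_div_div_pow_le N (le_of_lt hu)
    _ = 1 / (4 * N + 1 : ℝ) ^ 2 := by
        rw [integral_log_div_pow_Ioi_one]; push_cast; rfl

lemma tendsto_sum_range_integral_log_mul_one_sub_sq_div :
    Tendsto
      (fun N ↦ ∑ k ∈ Finset.range N, (-1) ^ k * (1 / (4 * k + 3 : ℝ) ^ 2 - 1 / (4 * k + 1 : ℝ) ^ 2))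
      atTop (𝓝 (∫ u in Ioi 1, log u * (1 - u ^ 2) / (u ^ 4 + 1))) := by
  have hbound : Tendsto (fun N : ℕ ↦ 1 / (4 * N + 1 : ℝ) ^ 2) atTop (𝓝 0) := by
    have : Tendsto (fun N : ℕ ↦ (4 * N + 1 : ℝ) ^ 2) atTop atTop :=
      (tendsto_pow_atTop two_ne_zero).comp (tendsto_atTop_add_const_right _ 1
        (tendsto_natCast_atTop_atTop.const_mul_atTop four_pos))
    exact this.inv_tendsto_atTop.congr fun N ↦ (one_div _).symm
  rw [tendsto_iff_norm_sub_tendsto_zero]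
  refine squeeze_zero (fun _ ↦ norm_nonneg _) (fun N ↦ ?_) hbound
  rw [norm_sub_rev]
  exact abs_integral_log_mul_one_sub_sq_div_sub_sum_le N

lemma log_div_pow_four_add_one_add_comp_inv {u : ℝ} (hu : u ≠ 0) :
    log u / (u ^ 4 + 1) + (u ^ 2)⁻¹ • (log u⁻¹ / (u⁻¹ ^ 4 + 1))
      = log u * (1 - u ^ 2) / (u ^ 4 + 1) := by
  rw [log_inv, smul_eq_mul]
  field_simp
  ring

lemma integrableOn_log_div_pow_four_add_one_Ioi_one :
    IntegrableOn (fun u ↦ log u / (u ^ 4 + 1)) (Ioi 1) :=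
  integrableOn_Ioi_one_of_abs_le_log_div_pow 0 (by fun_prop) fun u hu ↦ by
    have hu0 : 0 < u := one_pos.trans hu
    rw [abs_of_nonneg (by have := log_nonneg hu.le; positivity)]
    exact div_le_div_of_nonneg_left (log_nonneg hu.le) (by positivity)
      (by rw [zero_add]; nlinarith [sq_nonneg (u ^ 2 - 1), pow_pos hu0 2])

theorem stmt_3 :
    MeasureTheory.IntegrableOn (fun x : ℝ => Real.log x / (x^4 + 1)) (Set.Ioi 0) ∧
    ∫ x in Set.Ioi (0:ℝ), Real.log x / (x^4 + 1) = -(Real.pi^2 / (8 * Real.sqrt 2)) := by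
  have hsymm (u : ℝ) (hu : u ∈ Ioi 1) :=
    log_div_pow_four_add_one_add_comp_inv (one_pos.trans hu).ne'
  have hf := integrableOn_log_div_pow_four_add_one_Ioi_one
  have hf' : IntegrableOn (fun u : ℝ ↦ (u ^ 2)⁻¹ • (log u⁻¹ / (u⁻¹ ^ 4 + 1))) (Ioi 1) :=
    (integrableOn_log_mul_one_sub_sq_div_Ioi_one.sub hf).congr_fun
      (fun u hu ↦ by rw [Pi.sub_apply, ← hsymm u hu, add_sub_cancel_left]) measurableSet_Ioi
  refine ⟨integrableOn_Ioi_zero_of_comp_inv hf hf', ?_⟩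
  rw [integral_Ioi_zero_eq_integral_Ioi_one_add_comp_inv hf hf',
    setIntegral_congr_fun measurableSet_Ioi hsymm]
  exact tendsto_nhds_unique tendsto_sum_range_integral_log_mul_one_sub_sq_div
    hasSum_alternating_inv_sq_mod_eight.tendsto_sum_nat
end

section
/- For every real n > 1, the improper integral ∫₀^∞ (ln x)/(xⁿ + 1) dx converges and equals −(π²/n²)·cot(π/n)·csc(π/n). -/
/-!
The integral is the derivative at `s = 1` of the Mellin transform
`M(s) = ∫ t ^ (s - 1) / (t ^ n + 1) dt`, which is holomorphic in the strip `0 < re s < n` with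
derivative the Mellin transform of `log t / (t ^ n + 1)`. The substitution `t ↦ t ^ n` gives
`M(s) = n⁻¹ ∫ u ^ (s / n - 1) / (u + 1) du`, and `u = v / (1 - v)` turns the latter into the beta
integral `B(s / n, 1 - s / n) = Γ(s / n) Γ(1 - s / n) = π / sin (π s / n)`. Differentiating
`(π / n) / sin (π s / n)` at `s = 1` gives the value.
-/

open MeasureTheory Set Filter Real Asymptotics Topology

theorem Complex.sin_ne_zero_of_re_pos_of_re_lt_pi {z : ℂ} (h0 : 0 < z.re) (h1 : z.re < π) :
    Complex.sin z ≠ 0 := by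
  rw [Complex.sin_ne_zero_iff]
  rintro k rfl
  have hre : (k * π : ℂ).re = k * π := by simp
  rw [hre] at h0 h1
  have hk0 : (0 : ℝ) < k := pos_of_mul_pos_left h0 pi_pos.le
  have hk1 : (k : ℝ) < 1 := by nlinarith [pi_pos]
  norm_cast at hk0 hk1
  omega

theorem image_div_one_sub_Ioo : (fun u : ℝ => u / (1 - u)) '' Ioo 0 1 = Ioi 0 := by
  ext x
  simp only [mem_image, mem_Ioo, mem_Ioi]
  constructor
  · rintro ⟨u, ⟨hu0, hu1⟩, rfl⟩
    exact div_pos hu0 (sub_pos.mpr hu1)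
  · intro hx
    refine ⟨x / (1 + x), ⟨by positivity, (div_lt_one (by positivity)).mpr (by linarith)⟩, ?_⟩
    field_simp
    ring

-- Outside `0 < re z < 1` both sides are the junk value `0`: the change of variables also
-- transfers non-integrability.
theorem mellin_inv_add_one_eq_betaIntegral (z : ℂ) :
    mellin (fun t : ℝ => ((t : ℂ) + 1)⁻¹) z = Complex.betaIntegral z (1 - z) := by
  have hderiv : ∀ u ∈ Ioo (0 : ℝ) 1,
      HasDerivWithinAt (fun u : ℝ => u / (1 - u)) (((1 - u) ^ 2)⁻¹) (Ioo 0 1) u := by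
    rintro u ⟨-, hu1⟩
    have h1u : 1 - u ≠ 0 := (sub_pos.mpr hu1).ne'
    refine (((hasDerivAt_id u).div ((hasDerivAt_id u).const_sub 1) h1u).congr_deriv ?_)
      |>.hasDerivWithinAt
    simp only [id]
    field_simp
    ring
  have hinj : InjOn (fun u : ℝ => u / (1 - u)) (Ioo 0 1) := by
    rintro u ⟨-, hu⟩ v ⟨-, hv⟩ huv
    have h1u : 1 - u ≠ 0 := (sub_pos.mpr hu).ne'
    have h1v : 1 - v ≠ 0 := (sub_pos.mpr hv).ne'
    field_simp at huv
    linarith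
  rw [mellin, ← image_div_one_sub_Ioo,
    integral_image_eq_integral_abs_deriv_smul measurableSet_Ioo hderiv hinj, Complex.betaIntegral,
    intervalIntegral.integral_of_le zero_le_one, integral_Ioc_eq_integral_Ioo]
  refine setIntegral_congr_fun measurableSet_Ioo fun u ⟨hu0, hu1⟩ => ?_
  have h1u : (0 : ℝ) < 1 - u := sub_pos.mpr hu1
  have h1u' : (1 : ℂ) - u ≠ 0 := by exact_mod_cast h1u.ne'
  have hcpow : ((1 : ℂ) - u) ^ (z - 1) = (1 - u) ^ z / (1 - u) := by
    rw [Complex.cpow_sub _ _ h1u', Complex.cpow_one]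
  simp only [abs_of_pos (inv_pos.mpr (pow_pos h1u 2)), Complex.real_smul, smul_eq_mul,
    Complex.ofReal_div]
  rw [Complex.div_cpow_ofReal_nonneg hu0.le h1u.le]
  push_cast
  rw [hcpow, show (1 : ℂ) - z - 1 = -z by ring, Complex.cpow_neg]
  have hw : ((1 : ℂ) - u) ^ z ≠ 0 := Complex.cpow_ne_zero_iff.mpr (Or.inl h1u')
  generalize ((1 : ℂ) - u) ^ z = w at hw ⊢
  field_simp
  ring

theorem mellin_inv_add_one {z : ℂ} (hz0 : 0 < z.re) (hz1 : z.re < 1) :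
    mellin (fun t : ℝ => ((t : ℂ) + 1)⁻¹) z = π / Complex.sin (π * z) := by
  have h := Complex.Gamma_mul_Gamma_eq_betaIntegral hz0 (by simpa using hz1 : 0 < (1 - z).re)
  rw [add_sub_cancel, Complex.Gamma_one, one_mul, Complex.Gamma_mul_Gamma_one_sub] at h
  rw [mellin_inv_add_one_eq_betaIntegral, h]

theorem mellin_inv_rpow_add_one {n : ℝ} {s : ℂ} (hs0 : 0 < s.re) (hsn : s.re < n) :
    mellin (fun t : ℝ => (((t ^ n : ℝ) : ℂ) + 1)⁻¹) s = π / n / Complex.sin (π / n * s) := by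
  have hn : 0 < n := hs0.trans hsn
  have hre : (s / n).re = s.re / n := Complex.div_ofReal_re s n
  rw [mellin_comp_rpow (fun t : ℝ => ((t : ℂ) + 1)⁻¹), mellin_inv_add_one (by rw [hre]; positivity)
    (by rwa [hre, div_lt_one hn]), abs_of_pos hn, Complex.real_smul,
    show (π : ℂ) * (s / n) = π / n * s by ring]
  push_cast
  ring

theorem isBigO_atTop_inv_rpow_add_one (n : ℝ) :
    (fun t : ℝ => (((t ^ n : ℝ) : ℂ) + 1)⁻¹) =O[atTop] (· ^ (-n)) := by
  refine IsBigO.of_bound 1 ?_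
  filter_upwards [eventually_gt_atTop 0] with t ht
  have htn : 0 < t ^ n := rpow_pos_of_pos ht n
  rw [one_mul, Real.norm_of_nonneg (rpow_nonneg ht.le _), rpow_neg ht.le, norm_inv]
  norm_cast
  rw [Real.norm_of_nonneg (by positivity)]
  exact inv_anti₀ htn (by linarith)

theorem isBigO_nhdsGT_zero_inv_rpow_add_one (n : ℝ) :
    (fun t : ℝ => (((t ^ n : ℝ) : ℂ) + 1)⁻¹) =O[𝓝[>] 0] fun _ => (1 : ℝ) := by
  refine IsBigO.of_bound 1 ?_
  filter_upwards [self_mem_nhdsWithin] with t (ht : 0 < t)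
  rw [norm_one, one_mul, norm_inv]
  norm_cast
  rw [Real.norm_of_nonneg (by positivity)]
  exact inv_le_one_of_one_le₀ (by linarith [rpow_nonneg ht.le n])

theorem continuousOn_inv_rpow_add_one (n : ℝ) :
    ContinuousOn (fun t : ℝ => (((t ^ n : ℝ) : ℂ) + 1)⁻¹) (Ioi 0) := by
  have hpow : ContinuousOn (fun t : ℝ => t ^ n) (Ioi 0) :=
    fun t ht => (continuousAt_rpow_const t n (Or.inl (ne_of_gt ht))).continuousWithinAt
  refine ((Complex.continuous_ofReal.comp_continuousOn hpow).add continuousOn_const).inv₀ ?_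
  intro t (ht : 0 < t)
  simp only [Pi.add_apply, Function.comp_apply]
  norm_cast
  linarith [rpow_nonneg ht.le n]

theorem hasDerivAt_mellin_inv_rpow_add_one {n : ℝ} {s : ℂ} (hs0 : 0 < s.re) (hsn : s.re < n) :
    MellinConvergent (fun t : ℝ => Real.log t • (((t ^ n : ℝ) : ℂ) + 1)⁻¹) s ∧
      HasDerivAt (mellin fun t : ℝ => (((t ^ n : ℝ) : ℂ) + 1)⁻¹)
        (mellin (fun t : ℝ => Real.log t • (((t ^ n : ℝ) : ℂ) + 1)⁻¹) s) s :=
  mellin_hasDerivAt_of_isBigO_rpow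
    ((continuousOn_inv_rpow_add_one n).locallyIntegrableOn measurableSet_Ioi)
    (isBigO_atTop_inv_rpow_add_one n) hsn
    (b := 0) (by simpa using isBigO_nhdsGT_zero_inv_rpow_add_one n) hs0

theorem mellinConvergent_one_ofReal_iff {g : ℝ → ℝ} :
    MellinConvergent (fun t => (g t : ℂ)) 1 ↔ IntegrableOn g (Ioi 0) := by
  simp only [MellinConvergent, sub_self, Complex.cpow_zero, one_smul]
  exact ⟨fun h => (by simpa using h.re : Integrable g _), Integrable.ofReal⟩

theorem mellin_one_ofReal (g : ℝ → ℝ) :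
    mellin (fun t => (g t : ℂ)) 1 = ∫ t in Ioi 0, g t := by
  simp only [mellin, sub_self, Complex.cpow_zero, one_smul, integral_complex_ofReal]

theorem hasDerivAt_div_sin_mul (c a : ℂ) {z : ℂ} (hz : Complex.sin (a * z) ≠ 0) :
    HasDerivAt (fun s => c / Complex.sin (a * s))
      (-(c * a * Complex.cos (a * z)) / Complex.sin (a * z) ^ 2) z := by
  have h := (((hasDerivAt_id z).const_mul a).csin.fun_inv hz).const_mul c
  simp only [id, mul_one] at h
  simp only [div_eq_mul_inv c]
  exact h.congr_deriv (by ring)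

theorem mellin_log_smul_inv_rpow_add_one {n : ℝ} {s : ℂ} (hs0 : 0 < s.re) (hsn : s.re < n) :
    mellin (fun t : ℝ => Real.log t • (((t ^ n : ℝ) : ℂ) + 1)⁻¹) s =
      -(π / n * (π / n) * Complex.cos (π / n * s)) / Complex.sin (π / n * s) ^ 2 := by
  have hn : 0 < n := hs0.trans hsn
  have hstrip : IsOpen {w : ℂ | 0 < w.re ∧ w.re < n} :=
    (isOpen_lt continuous_const Complex.continuous_re).inter
      (isOpen_lt Complex.continuous_re continuous_const)
  have hclosed : (mellin fun t : ℝ => (((t ^ n : ℝ) : ℂ) + 1)⁻¹) =ᶠ[𝓝 s]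
      fun w => π / n / Complex.sin (π / n * w) := by
    filter_upwards [hstrip.mem_nhds ⟨hs0, hsn⟩] with w ⟨hw0, hwn⟩
    exact mellin_inv_rpow_add_one hw0 hwn
  have hre : (π / n * s : ℂ).re = π / n * s.re := by simp
  have hsin : Complex.sin (π / n * s) ≠ 0 := by
    refine Complex.sin_ne_zero_of_re_pos_of_re_lt_pi (by rw [hre]; positivity) ?_
    rw [hre, div_mul_eq_mul_div, div_lt_iff₀ hn]
    exact mul_lt_mul_of_pos_left hsn pi_pos
  exact (((hasDerivAt_div_sin_mul _ _ hsin).congr_of_eventuallyEq hclosed).unique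
    (hasDerivAt_mellin_inv_rpow_add_one hs0 hsn).2).symm

theorem stmt_4 (n : ℝ) (hn : 1 < n) :
    MeasureTheory.IntegrableOn (fun x : ℝ => Real.log x / (x ^ n + 1)) (Set.Ioi 0) ∧
    ∫ x in Set.Ioi (0:ℝ), Real.log x / (x ^ n + 1) =
      -(Real.pi^2 / n^2) * (Real.cos (Real.pi / n) / Real.sin (Real.pi / n)) *
        (1 / Real.sin (Real.pi / n)) := by
  have hs0 : 0 < (1 : ℂ).re := by simp
  have hsn : (1 : ℂ).re < n := by simpa using hn
  have hlog : (fun t : ℝ => Real.log t • (((t ^ n : ℝ) : ℂ) + 1)⁻¹) =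
      fun t => ((Real.log t / (t ^ n + 1) : ℝ) : ℂ) := by
    funext t
    push_cast
    rw [Complex.real_smul, div_eq_mul_inv]
  have hconv := (hasDerivAt_mellin_inv_rpow_add_one hs0 hsn).1
  have hvalue := mellin_log_smul_inv_rpow_add_one hs0 hsn
  rw [hlog] at hconv hvalue
  rw [mellin_one_ofReal, mul_one] at hvalue
  refine ⟨mellinConvergent_one_ofReal_iff.1 hconv, Complex.ofReal_injective ?_⟩
  have hsin : Complex.sin (π / n) ≠ 0 := by
    exact_mod_cast (sin_pos_of_pos_of_lt_pi (by positivity) (div_lt_self pi_pos hn)).ne'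
  rw [hvalue]
  push_cast
  field_simp
end

section
/- The limit as n → +∞ (n real, n > 1) of ∫₀^∞ (ln x)/(xⁿ + 1) dx equals −1. -/
open MeasureTheory Real Set Filter
open scoped Topology

/-!
For `0 < x ≠ 1` the weight `1 / (x ^ n + 1)` tends to `1` on `(0, 1)` and to `0` on `(1, ∞)`, and
once `n ≥ a` it is dominated by `1` on `(0, 1]` and by `x ^ (-a)` on `(1, ∞)`. By dominated
convergence, `∫₀^∞ f x / (x ^ n + 1) dx → ∫₀¹ f x dx` whenever `f` is integrable on `(0, 1]` and
`f x / x ^ a` is integrable on `(1, ∞)`. For `f = log` one can take `a = 3`, since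
`log x / x ^ 3 ≤ x ^ (-2)`, and `∫₀¹ log x dx = -1`.
-/

lemma tendsto_div_rpow_add_one_of_lt_one {x : ℝ} (hx₀ : 0 < x) (hx₁ : x < 1) (c : ℝ) :
    Tendsto (fun n : ℝ => c / (x ^ n + 1)) atTop (𝓝 c) := by
  have hpow := tendsto_rpow_atTop_of_base_lt_one x (by linarith) hx₁
  have h := (tendsto_const_nhds (x := c)).div (hpow.add_const 1) (by norm_num)
  rwa [zero_add, div_one] at h

lemma tendsto_div_rpow_add_one_of_one_lt {x : ℝ} (hx : 1 < x) (c : ℝ) :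
    Tendsto (fun n : ℝ => c / (x ^ n + 1)) atTop (𝓝 0) :=
  tendsto_const_nhds.div_atTop (tendsto_atTop_add_const_right _ 1
    (tendsto_rpow_atTop_of_base_gt_one x hx))

lemma norm_div_rpow_add_one_le {x : ℝ} (hx : 0 ≤ x) (c n : ℝ) :
    ‖c / (x ^ n + 1)‖ ≤ ‖c‖ := by
  have := rpow_nonneg hx n
  rw [norm_div, Real.norm_of_nonneg (show 0 ≤ x ^ n + 1 by linarith)]
  exact div_le_self (norm_nonneg c) (by linarith)

lemma norm_div_rpow_add_one_le_norm_div_rpow {x a n : ℝ} (hx : 1 ≤ x) (han : a ≤ n) (c : ℝ) :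
    ‖c / (x ^ n + 1)‖ ≤ ‖c / x ^ a‖ := by
  have ha : 0 < x ^ a := rpow_pos_of_pos (by linarith) a
  have hn : x ^ a ≤ x ^ n := rpow_le_rpow_of_exponent_le hx han
  rw [norm_div, norm_div, Real.norm_of_nonneg ha.le,
    Real.norm_of_nonneg (show 0 ≤ x ^ n + 1 by linarith)]
  gcongr
  linarith

lemma aestronglyMeasurable_of_integrableOn_div_rpow {f : ℝ → ℝ} {a : ℝ} {s : Set ℝ}
    (hs : MeasurableSet s) (hs₀ : s ⊆ Ioi 0) (h : IntegrableOn (fun x => f x / x ^ a) s) :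
    AEStronglyMeasurable f (volume.restrict s) := by
  refine (h.aestronglyMeasurable.mul (measurable_id.pow_const a).aestronglyMeasurable).congr ?_
  filter_upwards [ae_restrict_mem hs] with x hx
  exact div_mul_cancel₀ _ (rpow_pos_of_pos (hs₀ hx) a).ne'

theorem tendsto_setIntegral_div_rpow_add_one {f : ℝ → ℝ} {a : ℝ}
    (h₀ : IntegrableOn f (Ioc 0 1)) (h₁ : IntegrableOn (fun x => f x / x ^ a) (Ioi 1)) :
    Tendsto (fun n : ℝ => ∫ x in Ioi 0, f x / (x ^ n + 1)) atTop
      (𝓝 (∫ x in Ioc 0 1, f x)) := by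
  have hf : AEStronglyMeasurable f (volume.restrict (Ioi 0)) := by
    rw [← Ioc_union_Ioi_eq_Ioi zero_le_one, aestronglyMeasurable_union_iff]
    exact ⟨h₀.aestronglyMeasurable, aestronglyMeasurable_of_integrableOn_div_rpow
      measurableSet_Ioi (Ioi_subset_Ioi zero_le_one) h₁⟩
  have hlim : ∫ x in Ioc 0 1, f x = ∫ x in Ioi 0, (Iio 1).indicator f x := by
    rw [setIntegral_indicator measurableSet_Iio, Ioi_inter_Iio, integral_Ioc_eq_integral_Ioo]
  rw [hlim]
  refine tendsto_integral_filter_of_dominated_convergence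
    ((Ioc 0 1).indicator (fun x => ‖f x‖) + (Ioi 1).indicator (fun x => ‖f x / x ^ a‖))
    ?_ ?_ ?_ ?_
  · exact .of_forall fun n => hf.div₀ (by fun_prop)
  · filter_upwards [eventually_ge_atTop a] with n hn
    filter_upwards [ae_restrict_mem measurableSet_Ioi] with x (hx : 0 < x)
    rcases le_or_gt x 1 with hx₁ | hx₁
    · simpa [indicator_of_mem (show x ∈ Ioc 0 1 from ⟨hx, hx₁⟩),
        indicator_of_notMem (show x ∉ Ioi 1 from not_lt.2 hx₁)]
        using norm_div_rpow_add_one_le hx.le (f x) n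
    · simpa [indicator_of_notMem (show x ∉ Ioc 0 1 from fun h => h.2.not_gt hx₁),
        indicator_of_mem (show x ∈ Ioi 1 from hx₁)]
        using norm_div_rpow_add_one_le_norm_div_rpow hx₁.le hn (f x)
  · exact ((IntegrableOn.integrable_indicator h₀.norm measurableSet_Ioc).add
      (IntegrableOn.integrable_indicator h₁.norm measurableSet_Ioi)).integrableOn
  · have hne : ∀ᵐ x ∂(volume.restrict (Ioi (0 : ℝ))), x ∉ ({1} : Set ℝ) :=
      ae_restrict_of_ae (measure_eq_zero_iff_ae_notMem.1 (measure_singleton 1))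
    filter_upwards [ae_restrict_mem measurableSet_Ioi, hne] with x (hx : 0 < x) hx₁
    rcases lt_or_gt_of_ne hx₁ with hx₁ | hx₁
    · simpa [indicator_of_mem (show x ∈ Iio 1 from hx₁)]
        using tendsto_div_rpow_add_one_of_lt_one hx hx₁ (f x)
    · simpa [indicator_of_notMem (show x ∉ Iio 1 from not_lt.2 hx₁.le)]
        using tendsto_div_rpow_add_one_of_one_lt hx₁ (f x)

lemma integrableOn_log_div_rpow_three : IntegrableOn (fun x => log x / x ^ (3 : ℝ)) (Ioi 1) := by
  refine (integrableOn_Ioi_rpow_of_lt (a := -2) (by norm_num) one_pos).mono' ?_ ?_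
  · exact (measurable_log.div (measurable_id.pow_const _)).aestronglyMeasurable
  · filter_upwards [ae_restrict_mem measurableSet_Ioi] with x (hx : 1 < x)
    have hx₀ : 0 < x := by linarith
    have h3 : 0 < x ^ (3 : ℝ) := rpow_pos_of_pos hx₀ 3
    rw [Real.norm_of_nonneg (div_nonneg (log_nonneg hx.le) h3.le)]
    calc log x / x ^ (3 : ℝ) ≤ x / x ^ (3 : ℝ) := by
          gcongr; linarith [log_le_sub_one_of_pos hx₀]
      _ = x ^ (-2 : ℝ) := by
          rw [div_eq_iff h3.ne', ← rpow_add hx₀]; norm_num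

lemma integral_log_Ioc_zero_one : ∫ x in Ioc 0 1, log x = -1 := by
  rw [← intervalIntegral.integral_of_le zero_le_one, integral_log]
  simp

theorem stmt_6 :
    Filter.Tendsto
      (fun n : ℝ => ∫ x in Set.Ioi (0:ℝ), Real.log x / (x ^ n + 1))
      Filter.atTop (nhds (-1)) := by
  have h₀ : IntegrableOn log (Ioc 0 1) :=
    (intervalIntegrable_iff_integrableOn_Ioc_of_le zero_le_one).1
      intervalIntegral.intervalIntegrable_log'
  simpa [integral_log_Ioc_zero_one] using
    tendsto_setIntegral_div_rpow_add_one h₀ integrableOn_log_div_rpow_three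
end

section
/- For every real z with 0 < z < 1, ∫_{−∞}^{0} t·e^{−z t}/(1 − e^{−t}) dt = ψ¹(1 − z), where ψ¹ is the trigamma function. -/
noncomputable def trigamma (z : ℝ) : ℝ := ∑' k : ℕ, 1 / (z + k)^2

/-!
After the substitution `t = -s` the integrand becomes `s e^{-(1-z)s} / (1 - e^{-s})` on `(0, ∞)`.
Expanding `1 / (1 - e^{-s})` as a geometric series gives `∑ₖ s e^{-(a+k)s}` with `a = 1 - z > 0`,
and each term integrates to `Γ(2) / (a+k)² = 1 / (a+k)²`. The terms are nonnegative with summable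
integrals, so the series may be integrated termwise, which yields `∑ₖ 1 / (a+k)² = ψ¹(a)`.
-/

open MeasureTheory Set Real

lemma integral_Ioi_mul_exp_neg_mul {a : ℝ} (ha : 0 < a) :
    ∫ t in Ioi (0 : ℝ), t * exp (-(a * t)) = 1 / a ^ 2 := by
  have h := integral_rpow_mul_exp_neg_mul_Ioi two_pos ha
  norm_num [Real.Gamma_two] at h
  simpa [div_pow] using h

lemma integrableOn_Ioi_mul_exp_neg_mul {a : ℝ} (ha : 0 < a) :
    IntegrableOn (fun t : ℝ => t * exp (-(a * t))) (Ioi 0) := by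
  simpa using integrableOn_rpow_mul_exp_neg_mul_rpow (s := 1) (p := 1) (by norm_num) one_pos ha

lemma summable_one_div_add_nat_sq (a : ℝ) : Summable fun k : ℕ => 1 / (a + k) ^ 2 := by
  have h := (Real.summable_one_div_nat_add_rpow a 2).2 one_lt_two
  refine h.congr fun k => ?_
  rw [Real.rpow_two, sq_abs, add_comm]

lemma hasSum_mul_exp_neg_mul_add_nat (a : ℝ) {s : ℝ} (hs : 0 < s) :
    HasSum (fun k : ℕ => s * exp (-((a + k) * s))) (s * exp (-(a * s)) / (1 - exp (-s))) := by
  have hgeom := (hasSum_geometric_of_lt_one (exp_nonneg (-s))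
    (exp_lt_one_iff.2 (neg_neg_of_pos hs))).mul_left (s * exp (-(a * s)))
  have hterm : (fun k : ℕ => s * exp (-((a + k) * s))) =
      fun k : ℕ => s * exp (-(a * s)) * exp (-s) ^ k := funext fun k => by
    rw [← exp_nat_mul, mul_assoc, ← exp_add]
    ring_nf
  rw [hterm, div_eq_mul_inv]
  exact hgeom

theorem integral_Ioi_mul_exp_neg_mul_div_one_sub_exp_neg {a : ℝ} (ha : 0 < a) :
    ∫ s in Ioi (0 : ℝ), s * exp (-(a * s)) / (1 - exp (-s)) = trigamma a := by
  have hpos : ∀ k : ℕ, 0 < a + k := fun k => by positivity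
  have hnorm : ∀ k : ℕ, ∫ s in Ioi (0 : ℝ), ‖s * exp (-((a + k) * s))‖ = 1 / (a + k) ^ 2 := by
    intro k
    rw [← integral_Ioi_mul_exp_neg_mul (hpos k)]
    exact setIntegral_congr_fun measurableSet_Ioi fun s (hs : 0 < s) =>
      Real.norm_of_nonneg (by positivity)
  calc ∫ s in Ioi (0 : ℝ), s * exp (-(a * s)) / (1 - exp (-s))
      = ∫ s in Ioi (0 : ℝ), ∑' k : ℕ, s * exp (-((a + k) * s)) :=
        setIntegral_congr_fun measurableSet_Ioi fun s (hs : 0 < s) =>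
          (hasSum_mul_exp_neg_mul_add_nat a hs).tsum_eq.symm
    _ = ∑' k : ℕ, ∫ s in Ioi (0 : ℝ), s * exp (-((a + k) * s)) :=
        (integral_tsum_of_summable_integral_norm
          (fun k => integrableOn_Ioi_mul_exp_neg_mul (hpos k))
          ((summable_one_div_add_nat_sq a).congr fun k => (hnorm k).symm)).symm
    _ = trigamma a := tsum_congr fun k => integral_Ioi_mul_exp_neg_mul (hpos k)

theorem stmt_9_general (z : ℝ) (h1 : z < 1) :
    ∫ t in Set.Iio (0:ℝ), t * Real.exp (-z * t) / (1 - Real.exp (-t)) = trigamma (1 - z) := by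
  have hreflect : ∀ s : ℝ, 0 < s →
      -s * exp (-z * -s) / (1 - exp (- -s)) = s * exp (-((1 - z) * s)) / (1 - exp (-s)) := by
    intro s hs
    have hE : 1 - exp s ≠ 0 := sub_ne_zero.2 (one_lt_exp_iff.2 hs).ne
    have hE' : exp s - 1 ≠ 0 := sub_ne_zero.2 (one_lt_exp_iff.2 hs).ne'
    rw [neg_neg, neg_mul_neg, show -((1 - z) * s) = z * s + -s by ring, exp_add, exp_neg]
    field_simp
    ring
  calc ∫ t in Iio (0 : ℝ), t * exp (-z * t) / (1 - exp (-t))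
      = ∫ t in Iic (0 : ℝ), t * exp (-z * t) / (1 - exp (-t)) := integral_Iic_eq_integral_Iio.symm
    _ = ∫ s in Ioi (0 : ℝ), -s * exp (-z * -s) / (1 - exp (- -s)) := by
        simpa using (integral_comp_neg_Ioi 0 fun t => t * exp (-z * t) / (1 - exp (-t))).symm
    _ = ∫ s in Ioi (0 : ℝ), s * exp (-((1 - z) * s)) / (1 - exp (-s)) :=
        setIntegral_congr_fun measurableSet_Ioi hreflect
    _ = trigamma (1 - z) := integral_Ioi_mul_exp_neg_mul_div_one_sub_exp_neg (sub_pos.2 h1)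

theorem stmt_9 (z : ℝ) (h0 : 0 < z) (h1 : z < 1) :
    ∫ t in Set.Iio (0:ℝ), t * Real.exp (-z * t) / (1 - Real.exp (-t)) = trigamma (1 - z) :=
  stmt_9_general z h1
end
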